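/- arXiv:1103.3924 — 2 statements merged into one kernel-verified Lean document; each statement's English description precedes it below -/
import Mathlib

section
/- Let U : ℝ³ → [b,1] be radially symmetric and radially nondecreasing, p = (1,0,0), n = −p, and M ∈ B(0,1)∖[p,n]. Consider the function ξ : ℝ³ → ℝ of the dumbbell lemma built from level sets: ξ is constant equal to ξ₀(2−r) on each sphere ∂B((2,0,0),r) for r ∈ (1, 2−x₀), constant equal to ξ₀(r−2) on each sphere ∂B((−2,0,0),r) for r ∈ (1, 2+x₀), constant on the closed unit balls around (±2,0,0), and 0 elsewhere, where ξ₀(s)=∫_{x₀}^{s} U(t,0,0)² dt and M=(x₀,y₀,z₀). Then ξ is Lipschitz, satisfies |∇ξ| ≤ U² almost everywhere, ξ(p) − ξ(n) = d_{U²}(p,n), and ξ ≡ 0 on the complement of B((2,0,0), 2−x₀) ∪ B((−2,0,0), 2+x₀) (a neighborhood of M). -/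
open MeasureTheory Pointwise

open scoped NNReal

noncomputable section

/-- Euclidean three-space. -/
abbrev E3 := EuclideanSpace ℝ (Fin 3)

/-- Weighted geodesic distance: infimum of the `f`-weighted length over Lipschitz
curves `γ : [0,1] → ℝ³` joining `x` and `y`. -/
noncomputable def wdist (f : E3 → ℝ) (x y : E3) : ℝ :=
  sInf { L : ℝ | ∃ γ : ℝ → E3, (∃ K : NNReal, LipschitzWith K γ) ∧ γ 0 = x ∧ γ 1 = y ∧
    L = ∫ s in (0:ℝ)..1, f (γ s) * ‖deriv γ s‖ }

/-- The point `p = (1,0,0)` of `ℝ³`. -/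
noncomputable def e1 : E3 := EuclideanSpace.single (0 : Fin 3) (1:ℝ)

/-- The primitive `ξ₀(s) = ∫_{x₀}^{s} U(t,0,0)² dt`. -/
noncomputable def xi0 (U : E3 → ℝ) (x₀ : ℝ) (s : ℝ) : ℝ :=
  ∫ t in x₀..s, (U (t • e1))^2

/-- The dumbbell function `ξ` of the dumbbell lemma, defined by its level sets:
constant `ξ₀(±1)` on the closed unit balls around `(±2,0,0)`, equal to
`ξ₀(2-r)` on the spheres `∂B((2,0,0),r)`, `r ∈ (1,2-x₀)`, to `ξ₀(r-2)` on the
spheres `∂B((-2,0,0),r)`, `r ∈ (1,2+x₀)`, and `0` elsewhere. -/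
noncomputable def dumbbell (U : E3 → ℝ) (x₀ : ℝ) (x : E3) : ℝ :=
  if ‖x - (2:ℝ) • e1‖ ≤ 1 then xi0 U x₀ 1
  else if ‖x - (2:ℝ) • e1‖ < 2 - x₀ then xi0 U x₀ (2 - ‖x - (2:ℝ) • e1‖)
  else if ‖x + (2:ℝ) • e1‖ ≤ 1 then xi0 U x₀ (-1)
  else if ‖x + (2:ℝ) • e1‖ < 2 + x₀ then xi0 U x₀ (‖x + (2:ℝ) • e1‖ - 2)
  else 0

/-! ### Auxiliary lemmas -/

lemma e1_norm : ‖e1‖ = 1 := by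
  simp [e1, EuclideanSpace.norm_single]

lemma norm_smul_e1 (t : ℝ) : ‖t • e1‖ = |t| := by
  rw [norm_smul, e1_norm, mul_one, Real.norm_eq_abs]

/-- interval integrability of bounded measurable functions -/
lemma intervalIntegrable_of_bounded {g : ℝ → ℝ} {C : ℝ} (hg : Measurable g)
    (hbd : ∀ t, |g t| ≤ C) (a b : ℝ) : IntervalIntegrable g volume a b := by
  rw [intervalIntegrable_iff]
  have hfin : volume (Set.uIoc a b) < ⊤ := by
    rw [Set.uIoc, Real.volume_Ioc]; exact ENNReal.ofReal_lt_top
  exact (integrableOn_const hfin.ne).mono' hg.aestronglyMeasurable.restrict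
    (ae_of_all _ (by simpa [Real.norm_eq_abs] using hbd))

/-- A primitive of a function bounded by `C` is `C`-Lipschitz. -/
lemma lipschitz_primitive {g : ℝ → ℝ} {C : ℝ≥0} (hg : Measurable g)
    (hbd : ∀ t, |g t| ≤ C) (a : ℝ) :
    LipschitzWith C (fun s => ∫ t in a..s, g t) := by
  apply LipschitzWith.of_dist_le_mul
  intro s s'
  have h1 : (∫ t in a..s, g t) - ∫ t in a..s', g t = ∫ t in s'..s, g t :=
    intervalIntegral.integral_interval_sub_left (intervalIntegrable_of_bounded hg hbd a s)
      (intervalIntegrable_of_bounded hg hbd a s')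
  rw [Real.dist_eq, Real.dist_eq, h1]
  simpa [Real.norm_eq_abs] using
    intervalIntegral.norm_integral_le_of_norm_le_const
      (C := C) (f := g) (a := s') (b := s)
      (fun t _ => by simpa [Real.norm_eq_abs] using hbd t)

lemma eps_pos (n : ℕ) : (0:ℝ) < 1 / (n + 1) := by positivity

lemma eps_tendsto : Filter.Tendsto (fun n : ℕ => (1:ℝ) / (n + 1)) Filter.atTop (nhds 0) :=
  tendsto_one_div_add_atTop_nhds_zero_nat

/-- sequential difference quotients converge to the derivative -/
lemma tendsto_slope_seq {g : ℝ → ℝ} {c L : ℝ} (hg : HasDerivAt g L c) :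
    Filter.Tendsto (fun n : ℕ => ((1:ℝ)/(n+1))⁻¹ * (g (c + 1/(n+1)) - g c))
      Filter.atTop (nhds L) := by
  have hslope := hasDerivAt_iff_tendsto_slope.1 hg
  have hseq : Filter.Tendsto (fun n : ℕ => c + 1/(n+1)) Filter.atTop (nhdsWithin c {c}ᶜ) := by
    rw [tendsto_nhdsWithin_iff]
    constructor
    · simpa using tendsto_const_nhds.add eps_tendsto
    · exact Filter.Eventually.of_forall fun n => by
        simp only [Set.mem_compl_iff, Set.mem_singleton_iff]
        have := eps_pos n; intro hcon; nlinarith [hcon]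
  have := hslope.comp hseq
  refine this.congr fun n => ?_
  simp only [Function.comp_apply, slope_def_field]
  rw [div_eq_inv_mul, add_sub_cancel_left]

/-- FTC for Lipschitz functions: the integral of the (a.e.) derivative is the increment. -/
lemma lipschitz_integral_deriv {f : ℝ → ℝ} {K : ℝ≥0} (hf : LipschitzWith K f)
    {a b : ℝ} (hab : a ≤ b) : ∫ s in a..b, deriv f s = f b - f a := by
  have hcont : Continuous f := hf.continuous
  have hfint : ∀ c d : ℝ, IntervalIntegrable f volume c d := fun c d =>
    hcont.intervalIntegrable c d
  set ε : ℕ → ℝ := fun n => 1 / (n + 1) with hε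
  -- the endpoint limits
  have slope_lim : ∀ c : ℝ, Filter.Tendsto (fun n => (ε n)⁻¹ * ∫ u in c..(c + ε n), f u)
      Filter.atTop (nhds (f c)) := by
    intro c
    have hG : HasDerivAt (fun y => ∫ u in c..y, f u) (f c) c :=
      intervalIntegral.integral_hasDerivAt_right (hfint c c)
        (hcont.stronglyMeasurableAtFilter _ _) hcont.continuousAt
    have h0 : (∫ u in c..c, f u) = 0 := intervalIntegral.integral_same
    refine (tendsto_slope_seq hG).congr fun n => ?_
    rw [h0, sub_zero]
  -- the difference-quotient integrals
  have keyA : ∀ n, (∫ t in a..b, (f (t + ε n) - f t) / ε n) =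
      (ε n)⁻¹ * (∫ u in b..(b + ε n), f u) - (ε n)⁻¹ * ∫ u in a..(a + ε n), f u := by
    intro n
    have h1 : (∫ t in a..b, f (t + ε n)) = ∫ u in (a + ε n)..(b + ε n), f u :=
      intervalIntegral.integral_comp_add_right f (ε n)
    have h2 : (∫ t in a..b, (f (t + ε n) - f t)) =
        (∫ t in a..b, f (t + ε n)) - ∫ t in a..b, f t :=
      intervalIntegral.integral_sub
        ((hcont.comp (continuous_add_right (ε n))).intervalIntegrable a b) (hfint a b)
    have e1 : (∫ u in a..(a + ε n), f u) + (∫ u in (a + ε n)..(b + ε n), f u) =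
        ∫ u in a..(b + ε n), f u :=
      intervalIntegral.integral_add_adjacent_intervals (hfint _ _) (hfint _ _)
    have e2 : (∫ u in a..b, f u) + (∫ u in b..(b + ε n), f u) = ∫ u in a..(b + ε n), f u :=
      intervalIntegral.integral_add_adjacent_intervals (hfint _ _) (hfint _ _)
    have h3 : (∫ t in a..b, (f (t + ε n) - f t)) =
        (∫ u in b..(b + ε n), f u) - ∫ u in a..(a + ε n), f u := by
      rw [h2, h1]; linarith
    calc (∫ t in a..b, (f (t + ε n) - f t) / ε n)
        = (∫ t in a..b, (f (t + ε n) - f t)) / ε n := intervalIntegral.integral_div _ _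
      _ = (ε n)⁻¹ * (∫ u in b..(b + ε n), f u) - (ε n)⁻¹ * ∫ u in a..(a + ε n), f u := by
          rw [h3, sub_div, div_eq_inv_mul, div_eq_inv_mul]
  have limA : Filter.Tendsto (fun n => ∫ t in a..b, (f (t + ε n) - f t) / ε n)
      Filter.atTop (nhds (f b - f a)) := by
    refine Filter.Tendsto.congr (fun n => (keyA n).symm) ?_
    exact (slope_lim b).sub (slope_lim a)
  have limB : Filter.Tendsto (fun n => ∫ t in a..b, (f (t + ε n) - f t) / ε n)
      Filter.atTop (nhds (∫ s in a..b, deriv f s)) := by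
    simp only [intervalIntegral.integral_of_le hab]
    apply MeasureTheory.tendsto_integral_of_dominated_convergence (bound := fun _ => (K:ℝ))
    · intro n
      exact (((hcont.comp (continuous_add_right (ε n))).sub hcont).div_const
        (ε n)).aestronglyMeasurable.restrict
    · exact integrableOn_const (by rw [Real.volume_Ioc]; exact ENNReal.ofReal_lt_top.ne)
    · intro n
      refine MeasureTheory.ae_restrict_of_ae (Filter.Eventually.of_forall fun t => ?_)
      have hd : |f (t + ε n) - f t| ≤ K * (ε n) := by
        have h5 := hf.dist_le_mul (t + ε n) t
        rw [Real.dist_eq, Real.dist_eq, show t + ε n - t = ε n by ring,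
          abs_of_pos (eps_pos n)] at h5
        exact h5
      rw [Real.norm_eq_abs, abs_div, abs_of_pos (eps_pos n), div_le_iff₀ (eps_pos n)]
      linarith
    · refine MeasureTheory.ae_restrict_of_ae ?_
      filter_upwards [hf.ae_differentiableAt] with t ht
      refine (tendsto_slope_seq ht.hasDerivAt).congr fun n => ?_
      simp only [hε, one_div, div_eq_inv_mul]
  exact tendsto_nhds_unique limB limA

/-! ### facts about the axis weight -/

/-- the weight function on the axis -/
def hax (U : E3 → ℝ) : ℝ → ℝ := fun t => (U (t • e1))^2

lemma hax_meas {U : E3 → ℝ} (hmeas : Measurable U) : Measurable (hax U) :=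
  (hmeas.comp (measurable_id.smul_const e1)).pow_const 2

lemma hax_nonneg (U : E3 → ℝ) (t : ℝ) : 0 ≤ hax U t := sq_nonneg _

lemma hax_le_one {b : ℝ} {U : E3 → ℝ} (hb : 0 < b) (hrange : ∀ x, U x ∈ Set.Icc b 1)
    (t : ℝ) : hax U t ≤ 1 := by
  have h := hrange (t • e1)
  have h0 : 0 ≤ U (t • e1) := le_trans hb.le h.1
  calc (U (t • e1))^2 ≤ 1^2 := pow_le_pow_left₀ h0 h.2 2
    _ = 1 := one_pow 2

lemma hax_abs_le_one {b : ℝ} {U : E3 → ℝ} (hb : 0 < b) (hrange : ∀ x, U x ∈ Set.Icc b 1)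
    (t : ℝ) : |hax U t| ≤ 1 := by
  rw [abs_of_nonneg (hax_nonneg U t)]; exact hax_le_one hb hrange t

lemma hax_intervalIntegrable {b : ℝ} {U : E3 → ℝ} (hb : 0 < b) (hmeas : Measurable U)
    (hrange : ∀ x, U x ∈ Set.Icc b 1) (a c : ℝ) : IntervalIntegrable (hax U) volume a c :=
  intervalIntegrable_of_bounded (hax_meas hmeas) (hax_abs_le_one hb hrange) a c

lemma hax_mono {b : ℝ} {U : E3 → ℝ} (hb : 0 < b) (hrange : ∀ x, U x ∈ Set.Icc b 1)
    (hrad : ∀ x y : E3, ‖x‖ ≤ ‖y‖ → U x ≤ U y) {s t : ℝ} (hst : |s| ≤ |t|) :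
    hax U s ≤ hax U t := by
  have h1 : U (s • e1) ≤ U (t • e1) := hrad _ _ (by rw [norm_smul_e1, norm_smul_e1]; exact hst)
  exact pow_le_pow_left₀ (le_trans hb.le (hrange _).1) h1 2

lemma hax_even {U : E3 → ℝ} (hrad : ∀ x y : E3, ‖x‖ ≤ ‖y‖ → U x ≤ U y) (t : ℝ) :
    hax U (-t) = hax U t := by
  have h1 : ‖(-t) • e1‖ ≤ ‖t • e1‖ := by rw [norm_smul_e1, norm_smul_e1, abs_neg]
  have h2 : ‖t • e1‖ ≤ ‖(-t) • e1‖ := by rw [norm_smul_e1, norm_smul_e1, abs_neg]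
  have := le_antisymm (hrad _ _ h1) (hrad _ _ h2)
  simp only [hax, this]

lemma hax_le_sq {b : ℝ} {U : E3 → ℝ} (hb : 0 < b) (hrange : ∀ x, U x ∈ Set.Icc b 1)
    (hrad : ∀ x y : E3, ‖x‖ ≤ ‖y‖ → U x ≤ U y) {t : ℝ} {x : E3} (h : |t| ≤ ‖x‖) :
    hax U t ≤ (U x)^2 := by
  have h1 : U (t • e1) ≤ U x := hrad _ _ (by rwa [norm_smul_e1])
  exact pow_le_pow_left₀ (le_trans hb.le (hrange _).1) h1 2

lemma xi0_eq (U : E3 → ℝ) (x₀ s : ℝ) : xi0 U x₀ s = ∫ t in x₀..s, hax U t := rfl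

lemma xi0_sub {b : ℝ} {U : E3 → ℝ} (hb : 0 < b) (hmeas : Measurable U)
    (hrange : ∀ x, U x ∈ Set.Icc b 1) (x₀ s s' : ℝ) :
    xi0 U x₀ s - xi0 U x₀ s' = ∫ t in s'..s, hax U t := by
  rw [xi0_eq, xi0_eq]
  exact intervalIntegral.integral_interval_sub_left
    (hax_intervalIntegrable hb hmeas hrange x₀ s) (hax_intervalIntegrable hb hmeas hrange x₀ s')

lemma xi0_self (U : E3 → ℝ) (x₀ : ℝ) : xi0 U x₀ x₀ = 0 := by
  rw [xi0_eq, intervalIntegral.integral_same]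

lemma xi0_lipschitz {b : ℝ} {U : E3 → ℝ} (hb : 0 < b) (hmeas : Measurable U)
    (hrange : ∀ x, U x ∈ Set.Icc b 1) (x₀ : ℝ) : LipschitzWith 1 (xi0 U x₀) := by
  have := lipschitz_primitive (C := 1) (hax_meas hmeas)
    (by simpa using hax_abs_le_one hb hrange) x₀
  exact this

/-! ### the clamped representation of the dumbbell -/

/-- the profile near `+2e₁` -/
def Fprof (U : E3 → ℝ) (x₀ : ℝ) (r : ℝ) : ℝ := xi0 U x₀ (max x₀ (min 1 (2 - r)))

/-- the profile near `-2e₁` -/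
def Gprof (U : E3 → ℝ) (x₀ : ℝ) (r : ℝ) : ℝ := xi0 U x₀ (min x₀ (max (-1) (r - 2)))

lemma four_le_norms (x : E3) : 4 ≤ ‖x - (2:ℝ) • e1‖ + ‖x + (2:ℝ) • e1‖ := by
  have h4 : (x + (2:ℝ) • e1) - (x - (2:ℝ) • e1) = (4:ℝ) • e1 := by module
  have : ‖(x + (2:ℝ) • e1) - (x - (2:ℝ) • e1)‖ ≤ ‖x + (2:ℝ) • e1‖ + ‖x - (2:ℝ) • e1‖ :=
    norm_sub_le _ _
  rw [h4, norm_smul_e1] at this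
  rw [abs_of_nonneg (by norm_num : (0:ℝ) ≤ 4)] at this
  linarith

lemma dumbbell_eq_profiles {U : E3 → ℝ} {x₀ : ℝ} (hx₀ : |x₀| < 1) (x : E3) :
    dumbbell U x₀ x = Fprof U x₀ (‖x - (2:ℝ) • e1‖) + Gprof U x₀ (‖x + (2:ℝ) • e1‖) := by
  obtain ⟨hx₀l, hx₀r⟩ := abs_lt.1 hx₀
  have hsum := four_le_norms x
  set r := ‖x - (2:ℝ) • e1‖ with hr
  set q := ‖x + (2:ℝ) • e1‖ with hq
  rw [dumbbell, Fprof, Gprof]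
  by_cases h1 : r ≤ 1
  · rw [if_pos h1]
    rw [min_eq_left (by linarith : (1:ℝ) ≤ 2 - r), max_eq_right hx₀r.le]
    rw [max_eq_right (by linarith : (-1:ℝ) ≤ q - 2), min_eq_left (by linarith : x₀ ≤ q - 2)]
    rw [xi0_self]; ring
  · by_cases h2 : r < 2 - x₀
    · rw [if_neg h1, if_pos h2]
      push_neg at h1
      rw [min_eq_right (by linarith : 2 - r ≤ 1), max_eq_right (by linarith : x₀ ≤ 2 - r)]
      rw [max_eq_right (by linarith : (-1:ℝ) ≤ q - 2), min_eq_left (by linarith : x₀ ≤ q - 2)]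
      rw [xi0_self]; ring
    · push_neg at h1 h2
      rw [if_neg (by linarith), if_neg (by linarith)]
      rw [min_eq_right (by linarith : 2 - r ≤ 1), max_eq_left (by linarith : 2 - r ≤ x₀),
        xi0_self]
      by_cases h3 : q ≤ 1
      · rw [if_pos h3, max_eq_left (by linarith : q - 2 ≤ -1),
          min_eq_right (by linarith : (-1:ℝ) ≤ x₀)]
        ring
      · by_cases h4 : q < 2 + x₀
        · rw [if_neg h3, if_pos h4]
          push_neg at h3
          rw [max_eq_right (by linarith : (-1:ℝ) ≤ q - 2),
            min_eq_right (by linarith : q - 2 ≤ x₀)]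
          ring
        · push_neg at h3 h4
          rw [if_neg (by linarith), if_neg (by linarith)]
          rw [max_eq_right (by linarith : (-1:ℝ) ≤ q - 2),
            min_eq_left (by linarith : x₀ ≤ q - 2), xi0_self]
          ring

lemma dumbbell_lipschitz {b : ℝ} {U : E3 → ℝ} (hb : 0 < b) (hmeas : Measurable U)
    (hrange : ∀ x, U x ∈ Set.Icc b 1) {x₀ : ℝ} (hx₀ : |x₀| < 1) :
    LipschitzWith 2 (dumbbell U x₀) := by
  have hxi := xi0_lipschitz hb hmeas hrange x₀
  have hclampF : LipschitzWith 1 (fun r : ℝ => max x₀ (min 1 (2 - r))) := by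
    have l1 : LipschitzWith 1 (fun r : ℝ => 2 - r) := by
      simpa using (LipschitzWith.const (2:ℝ)).sub LipschitzWith.id
    simpa [min_comm] using (l1.min_const 1 |>.const_max x₀)
  have hclampG : LipschitzWith 1 (fun r : ℝ => min x₀ (max (-1) (r - 2))) := by
    have l1 : LipschitzWith 1 (fun r : ℝ => r - 2) := by
      simpa using LipschitzWith.id.sub (LipschitzWith.const (2:ℝ))
    simpa [max_comm] using (l1.max_const (-1) |>.const_min x₀)
  have hnP : LipschitzWith 1 (fun x : E3 => ‖x - (2:ℝ) • e1‖) := by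
    refine (lipschitzWith_one_norm.comp
      (LipschitzWith.id.sub (LipschitzWith.const ((2:ℝ) • e1)))).weaken ?_; simp
  have hnM : LipschitzWith 1 (fun x : E3 => ‖x + (2:ℝ) • e1‖) := by
    refine (lipschitzWith_one_norm.comp
      (LipschitzWith.id.add (LipschitzWith.const ((2:ℝ) • e1)))).weaken ?_; simp
  have hFl : LipschitzWith 1 (fun x : E3 => Fprof U x₀ (‖x - (2:ℝ) • e1‖)) := by
    simpa [Function.comp_def, Fprof] using (hxi.comp hclampF).comp hnP
  have hGl : LipschitzWith 1 (fun x : E3 => Gprof U x₀ (‖x + (2:ℝ) • e1‖)) := by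
    simpa [Function.comp_def, Gprof] using (hxi.comp hclampG).comp hnM
  have heq : dumbbell U x₀ = fun x : E3 =>
      Fprof U x₀ (‖x - (2:ℝ) • e1‖) + Gprof U x₀ (‖x + (2:ℝ) • e1‖) :=
    funext (dumbbell_eq_profiles hx₀)
  rw [heq]
  have : (2:ℝ≥0) = 1 + 1 := by norm_num
  rw [this]
  exact hFl.add hGl

lemma hax_abs {U : E3 → ℝ} (hrad : ∀ x y : E3, ‖x‖ ≤ ‖y‖ → U x ≤ U y) (t : ℝ) :
    hax U |t| = hax U t := by
  rcases abs_cases t with ⟨h, _⟩ | ⟨h, _⟩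
  · rw [h]
  · rw [h]; exact hax_even hrad t

lemma abs_dist_interval {t a c : ℝ} (ht : t ∈ Set.uIoc a c) : |t - a| ≤ |c - a| := by
  have h1 : min a c ≤ t := le_of_lt ht.1
  have h2 : t ≤ max a c := ht.2
  rcases le_total a c with h | h
  · rw [min_eq_left h] at h1; rw [max_eq_right h] at h2
    rw [abs_of_nonneg (by linarith), abs_of_nonneg (by linarith)]; linarith
  · rw [min_eq_right h] at h1; rw [max_eq_left h] at h2
    rw [abs_of_nonpos (by linarith), abs_of_nonpos (by linarith)]; linarith

/-- bound for the local Lipschitz constant / fderiv on the `+` annulus -/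
lemma dumbbell_fderiv_bound_plus {b : ℝ} {U : E3 → ℝ} (hb : 0 < b) (hmeas : Measurable U)
    (hrange : ∀ x, U x ∈ Set.Icc b 1) (hrad : ∀ x y : E3, ‖x‖ ≤ ‖y‖ → U x ≤ U y)
    {x₀ : ℝ} (hx₀ : |x₀| < 1) {x : E3}
    (h1 : 1 < ‖x - (2:ℝ) • e1‖) (h2 : ‖x - (2:ℝ) • e1‖ < 2 - x₀)
    (hcont : ContinuousAt (fun s => hax U (max s 0)) |2 - ‖x - (2:ℝ) • e1‖|) :
    ‖fderiv ℝ (dumbbell U x₀) x‖ ≤ (U x)^2 := by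
  set φ : ℝ → ℝ := fun s => hax U (max s 0) with hφ
  set r := ‖x - (2:ℝ) • e1‖ with hr
  set ρ : ℝ := 2 - r with hρ
  have hφabs : ∀ t : ℝ, φ |t| = hax U t := by
    intro t
    rw [hφ]
    simp only [max_eq_left (abs_nonneg t)]
    exact hax_abs hrad t
  have hbound : ∀ ε > 0, ‖fderiv ℝ (dumbbell U x₀) x‖ ≤ φ |ρ| + ε := by
    intro ε hε
    obtain ⟨δ, hδpos, hδ⟩ := Metric.continuousAt_iff.1 hcont ε hε
    set δ0 : ℝ := min (min (δ/2) ((r - 1)/2)) ((2 - x₀ - r)/2) with hδ0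
    have hδ0pos : 0 < δ0 := by
      apply lt_min (lt_min (by linarith) (by linarith)) (by linarith)
    have hδ0a : δ0 ≤ δ/2 := le_trans (min_le_left _ _) (min_le_left _ _)
    have hδ0b : δ0 ≤ (r - 1)/2 := le_trans (min_le_left _ _) (min_le_right _ _)
    have hδ0c : δ0 ≤ (2 - x₀ - r)/2 := min_le_right _ _
    have hC0 : 0 ≤ φ |ρ| + ε := by
      have := hax_nonneg U (max |ρ| 0); positivity
    apply norm_fderiv_le_of_lip' ℝ hC0
    filter_upwards [Metric.ball_mem_nhds x hδ0pos] with y hy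
    have hyx : |‖y - (2:ℝ) • e1‖ - r| ≤ ‖y - x‖ := by
      have h7 := abs_norm_sub_norm_le (y - (2:ℝ) • e1) (x - (2:ℝ) • e1)
      rw [sub_sub_sub_cancel_right] at h7
      exact h7
    have hylt : ‖y - x‖ < δ0 := by rw [← dist_eq_norm]; exact Metric.mem_ball.1 hy
    set ry := ‖y - (2:ℝ) • e1‖ with hry
    have habs := abs_lt.1 (lt_of_le_of_lt hyx hylt)
    have hry1 : 1 < ry := by linarith
    have hry2 : ry < 2 - x₀ := by linarith
    have hvy : dumbbell U x₀ y = xi0 U x₀ (2 - ry) := by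
      rw [dumbbell, if_neg (by rw [← hry]; linarith), if_pos (by rw [← hry]; linarith)]
    have hvx : dumbbell U x₀ x = xi0 U x₀ ρ := by
      rw [dumbbell, if_neg (by rw [← hr]; linarith), if_pos (by rw [← hr]; linarith)]
    rw [hvy, hvx, Real.norm_eq_abs]
    have hsub : xi0 U x₀ (2 - ry) - xi0 U x₀ ρ = ∫ t in ρ..(2 - ry), hax U t :=
      xi0_sub hb hmeas hrange x₀ (2 - ry) ρ
    rw [hsub]
    have hbd : ∀ t ∈ Set.uIoc ρ (2 - ry), ‖hax U t‖ ≤ φ |ρ| + ε := by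
      intro t ht
      have h8 : |t - ρ| ≤ |(2 - ry) - ρ| := abs_dist_interval ht
      have h9 : |(2 - ry) - ρ| = |ry - r| := by rw [hρ]; rw [abs_sub_comm]; congr 1; ring
      have h10 : |t - ρ| < δ0 := by rw [h9] at h8; linarith
      have h11 := abs_abs_sub_abs_le_abs_sub t ρ
      have h12 : dist |t| |ρ| < δ := by
        rw [Real.dist_eq]; linarith
      have h13 := hδ h12
      rw [Real.dist_eq] at h13
      have h14 := abs_lt.1 h13
      rw [Real.norm_eq_abs, abs_of_nonneg (hax_nonneg U t), ← hφabs t]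
      linarith [h14.2]
    calc |∫ t in ρ..(2 - ry), hax U t| ≤ (φ |ρ| + ε) * |(2 - ry) - ρ| := by
          simpa [Real.norm_eq_abs] using
            intervalIntegral.norm_integral_le_of_norm_le_const hbd
      _ ≤ (φ |ρ| + ε) * ‖y - x‖ := by
          apply mul_le_mul_of_nonneg_left _ hC0
          have h9 : |(2 - ry) - ρ| = |ry - r| := by
            rw [hρ]; rw [abs_sub_comm]; congr 1; ring
          rw [h9]; exact hyx
  have hfin := le_of_forall_pos_le_add hbound
  have hnx : |ρ| ≤ ‖x‖ := by
    have h15 := abs_norm_sub_norm_le (x - (2:ℝ) • e1) (-((2:ℝ) • e1))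
    rw [sub_neg_eq_add, sub_add_cancel, norm_neg, norm_smul_e1] at h15
    rw [hρ, abs_sub_comm]
    simpa using h15
  calc ‖fderiv ℝ (dumbbell U x₀) x‖ ≤ φ |ρ| := hfin
    _ = hax U ρ := hφabs ρ
    _ ≤ (U x)^2 := hax_le_sq hb hrange hrad hnx

/-- bound for the local Lipschitz constant / fderiv on the `-` annulus -/
lemma dumbbell_fderiv_bound_minus {b : ℝ} {U : E3 → ℝ} (hb : 0 < b) (hmeas : Measurable U)
    (hrange : ∀ x, U x ∈ Set.Icc b 1) (hrad : ∀ x y : E3, ‖x‖ ≤ ‖y‖ → U x ≤ U y)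
    {x₀ : ℝ} (hx₀ : |x₀| < 1) {x : E3}
    (h1 : 1 < ‖x + (2:ℝ) • e1‖) (h2 : ‖x + (2:ℝ) • e1‖ < 2 + x₀)
    (hcont : ContinuousAt (fun s => hax U (max s 0)) |‖x + (2:ℝ) • e1‖ - 2|) :
    ‖fderiv ℝ (dumbbell U x₀) x‖ ≤ (U x)^2 := by
  obtain ⟨hx₀l, hx₀r⟩ := abs_lt.1 hx₀
  set φ : ℝ → ℝ := fun s => hax U (max s 0) with hφ
  set q := ‖x + (2:ℝ) • e1‖ with hq
  set ρ : ℝ := q - 2 with hρ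
  have hφabs : ∀ t : ℝ, φ |t| = hax U t := by
    intro t
    rw [hφ]
    simp only [max_eq_left (abs_nonneg t)]
    exact hax_abs hrad t
  have hbound : ∀ ε > 0, ‖fderiv ℝ (dumbbell U x₀) x‖ ≤ φ |ρ| + ε := by
    intro ε hε
    obtain ⟨δ, hδpos, hδ⟩ := Metric.continuousAt_iff.1 hcont ε hε
    set δ0 : ℝ := min (min (δ/2) ((q - 1)/2)) ((2 + x₀ - q)/2) with hδ0
    have hδ0pos : 0 < δ0 := by
      apply lt_min (lt_min (by linarith) (by linarith)) (by linarith)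
    have hδ0a : δ0 ≤ δ/2 := le_trans (min_le_left _ _) (min_le_left _ _)
    have hδ0b : δ0 ≤ (q - 1)/2 := le_trans (min_le_left _ _) (min_le_right _ _)
    have hδ0c : δ0 ≤ (2 + x₀ - q)/2 := min_le_right _ _
    have hC0 : 0 ≤ φ |ρ| + ε := by
      have := hax_nonneg U (max |ρ| 0); positivity
    apply norm_fderiv_le_of_lip' ℝ hC0
    filter_upwards [Metric.ball_mem_nhds x hδ0pos] with y hy
    have hyx : |‖y + (2:ℝ) • e1‖ - q| ≤ ‖y - x‖ := by
      have h7 := abs_norm_sub_norm_le (y + (2:ℝ) • e1) (x + (2:ℝ) • e1)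
      rw [add_sub_add_right_eq_sub] at h7
      exact h7
    have hylt : ‖y - x‖ < δ0 := by rw [← dist_eq_norm]; exact Metric.mem_ball.1 hy
    set qy := ‖y + (2:ℝ) • e1‖ with hqy
    have habs := abs_lt.1 (lt_of_le_of_lt hyx hylt)
    have hqy1 : 1 < qy := by linarith
    have hqy2 : qy < 2 + x₀ := by linarith
    have hfour := four_le_norms y
    rw [← hqy] at hfour
    have hvy : dumbbell U x₀ y = xi0 U x₀ (qy - 2) := by
      rw [dumbbell, if_neg (by linarith), if_neg (by push_neg; linarith),
        if_neg (by rw [← hqy]; linarith), if_pos (by rw [← hqy]; linarith)]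
    have hfourx := four_le_norms x
    rw [← hq] at hfourx
    have hvx : dumbbell U x₀ x = xi0 U x₀ ρ := by
      rw [dumbbell, if_neg (by linarith), if_neg (by push_neg; linarith),
        if_neg (by rw [← hq]; linarith), if_pos (by rw [← hq]; linarith)]
    rw [hvy, hvx, Real.norm_eq_abs]
    have hsub : xi0 U x₀ (qy - 2) - xi0 U x₀ ρ = ∫ t in ρ..(qy - 2), hax U t :=
      xi0_sub hb hmeas hrange x₀ (qy - 2) ρ
    rw [hsub]
    have hbd : ∀ t ∈ Set.uIoc ρ (qy - 2), ‖hax U t‖ ≤ φ |ρ| + ε := by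
      intro t ht
      have h8 : |t - ρ| ≤ |(qy - 2) - ρ| := abs_dist_interval ht
      have h9 : |(qy - 2) - ρ| = |qy - q| := by rw [hρ]; congr 1; ring
      have h10 : |t - ρ| < δ0 := by rw [h9] at h8; linarith
      have h11 := abs_abs_sub_abs_le_abs_sub t ρ
      have h12 : dist |t| |ρ| < δ := by
        rw [Real.dist_eq]; linarith
      have h13 := hδ h12
      rw [Real.dist_eq] at h13
      have h14 := abs_lt.1 h13
      rw [Real.norm_eq_abs, abs_of_nonneg (hax_nonneg U t), ← hφabs t]
      linarith [h14.2]
    calc |∫ t in ρ..(qy - 2), hax U t| ≤ (φ |ρ| + ε) * |(qy - 2) - ρ| := by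
          simpa [Real.norm_eq_abs] using
            intervalIntegral.norm_integral_le_of_norm_le_const hbd
      _ ≤ (φ |ρ| + ε) * ‖y - x‖ := by
          apply mul_le_mul_of_nonneg_left _ hC0
          have h9 : |(qy - 2) - ρ| = |qy - q| := by rw [hρ]; congr 1; ring
          rw [h9]; exact hyx
  have hfin := le_of_forall_pos_le_add hbound
  have hnx : |ρ| ≤ ‖x‖ := by
    have h15 := abs_norm_sub_norm_le (x + (2:ℝ) • e1) ((2:ℝ) • e1)
    rw [add_sub_cancel_right, norm_smul_e1] at h15
    rw [hρ]
    simpa using h15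
  calc ‖fderiv ℝ (dumbbell U x₀) x‖ ≤ φ |ρ| := hfin
    _ = hax U ρ := hφabs ρ
    _ ≤ (U x)^2 := hax_le_sq hb hrange hrad hnx

lemma dumbbell_zero_outside {U : E3 → ℝ} {x₀ : ℝ} (hx₀ : |x₀| < 1) (x : E3)
    (h1 : 2 - x₀ ≤ ‖x - (2:ℝ) • e1‖) (h2 : 2 + x₀ ≤ ‖x + (2:ℝ) • e1‖) :
    dumbbell U x₀ x = 0 := by
  rw [dumbbell, if_neg, if_neg, if_neg, if_neg] <;> push_neg <;> linarith [abs_lt.1 hx₀]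

lemma dumbbell_fderiv_ae {b : ℝ} {U : E3 → ℝ} (hb : 0 < b) (hmeas : Measurable U)
    (hrange : ∀ x, U x ∈ Set.Icc b 1) (hrad : ∀ x y : E3, ‖x‖ ≤ ‖y‖ → U x ≤ U y)
    {x₀ : ℝ} (hx₀ : |x₀| < 1) :
    ∀ᵐ x : E3 ∂volume, ‖fderiv ℝ (dumbbell U x₀) x‖ ≤ (U x)^2 := by
  obtain ⟨hx₀l, hx₀r⟩ := abs_lt.1 hx₀
  set φ : ℝ → ℝ := fun s => hax U (max s 0) with hφ
  have hφmono : Monotone φ := by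
    intro s t hst
    apply hax_mono hb hrange hrad
    rw [abs_of_nonneg (le_max_right s 0), abs_of_nonneg (le_max_right t 0)]
    exact max_le_max hst (le_refl 0)
  set T := {s : ℝ | ¬ContinuousAt φ s} with hT
  have hTcount : T.Countable := hφmono.countable_not_continuousAt
  set B : Set ℝ := ({1, 2 - x₀, 2 + x₀} : Set ℝ) ∪ ((fun t => 2 - t) '' T) ∪
    ((fun t => 2 + t) '' T) with hB
  have hBcount : B.Countable :=
    (((Set.toFinite ({1, 2 - x₀, 2 + x₀} : Set ℝ)).countable).union
      (hTcount.image _)).union (hTcount.image _)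
  have hnull : ∀ c : E3, volume {x : E3 | ‖x - c‖ ∈ B} = 0 := by
    intro c
    have hdecomp : {x : E3 | ‖x - c‖ ∈ B} = ⋃ ρ ∈ B, Metric.sphere c ρ := by
      ext y
      simp only [Set.mem_setOf_eq, Set.mem_iUnion, Metric.mem_sphere, dist_eq_norm]
      constructor
      · intro hmem; exact ⟨_, hmem, rfl⟩
      · rintro ⟨ρ, hρ, h⟩; rwa [h]
    rw [hdecomp, measure_biUnion_null_iff hBcount]
    intro ρ _
    exact MeasureTheory.Measure.addHaar_sphere volume c ρ
  have hzP := (MeasureTheory.measure_eq_zero_iff_ae_notMem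
    (μ := (volume : Measure E3))).1 (hnull ((2:ℝ) • e1))
  have hzM := (MeasureTheory.measure_eq_zero_iff_ae_notMem
    (μ := (volume : Measure E3))).1 (hnull (-((2:ℝ) • e1)))
  filter_upwards [hzP, hzM] with x hx1' hx2'
  have hx1 : ‖x - (2:ℝ) • e1‖ ∉ B := hx1'
  have hx2 : ‖x + (2:ℝ) • e1‖ ∉ B := by
    intro h; exact hx2' (show ‖x - (-((2:ℝ) • e1))‖ ∈ B by rwa [sub_neg_eq_add])
  set r := ‖x - (2:ℝ) • e1‖ with hr
  set q := ‖x + (2:ℝ) • e1‖ with hq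
  have hsum := four_le_norms x
  rw [← hr, ← hq] at hsum
  -- membership helpers
  have hmem1 : (1:ℝ) ∈ B := by rw [hB]; left; left; simp
  have hmem2 : (2 - x₀) ∈ B := by rw [hB]; left; left; simp
  have hmem3 : (2 + x₀) ∈ B := by rw [hB]; left; left; simp
  have hmemIm1 : ∀ s : ℝ, (2 - s) ∈ T → s ∈ B := by
    intro s hs; rw [hB]; left; right; exact ⟨2 - s, hs, by ring⟩
  have hmemIm2 : ∀ s : ℝ, (s - 2) ∈ T → s ∈ B := by
    intro s hs; rw [hB]; right; exact ⟨s - 2, hs, by ring⟩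
  have hcr : ContinuousAt φ |2 - r| := by
    rcases abs_cases (2 - r) with ⟨h, _⟩ | ⟨h, _⟩
    · rw [h]; by_contra hcon; exact hx1 (hmemIm1 r hcon)
    · rw [h, neg_sub]; by_contra hcon; exact hx1 (hmemIm2 r hcon)
  have hcq : ContinuousAt φ |q - 2| := by
    rcases abs_cases (q - 2) with ⟨h, _⟩ | ⟨h, _⟩
    · rw [h]; by_contra hcon; exact hx2 (hmemIm2 q hcon)
    · rw [h, neg_sub]; by_contra hcon; exact hx2 (hmemIm1 q hcon)
  have hrne1 : r ≠ 1 := fun h => hx1 (h ▸ hmem1)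
  have hrne2 : r ≠ 2 - x₀ := fun h => hx1 (h ▸ hmem2)
  have hqne1 : q ≠ 1 := fun h => hx2 (h ▸ hmem1)
  have hqne3 : q ≠ 2 + x₀ := fun h => hx2 (h ▸ hmem3)
  have hUnn : (0:ℝ) ≤ (U x)^2 := sq_nonneg _
  by_cases hA : r < 1
  · -- locally constant near +2e₁
    have hopen : IsOpen {y : E3 | ‖y - (2:ℝ) • e1‖ < 1} :=
      isOpen_Iio.preimage ((continuous_id.sub continuous_const).norm)
    have hev : dumbbell U x₀ =ᶠ[nhds x] fun _ => xi0 U x₀ 1 := by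
      filter_upwards [hopen.mem_nhds (by exact hA)] with y hy
      exact if_pos (le_of_lt hy)
    rw [hev.fderiv_eq]
    simp [hUnn]
  · push_neg at hA
    have hr1 : 1 < r := lt_of_le_of_ne hA (Ne.symm hrne1)
    by_cases hC : r < 2 - x₀
    · exact dumbbell_fderiv_bound_plus hb hmeas hrange hrad hx₀ hr1 hC hcr
    · push_neg at hC
      have hr2 : 2 - x₀ < r := lt_of_le_of_ne hC (Ne.symm hrne2)
      by_cases hBq : q < 1
      · -- locally constant near -2e₁
        have hopen : IsOpen {y : E3 | ‖y + (2:ℝ) • e1‖ < 1} :=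
          isOpen_Iio.preimage ((continuous_id.add continuous_const).norm)
        have hev : dumbbell U x₀ =ᶠ[nhds x] fun _ => xi0 U x₀ (-1) := by
          filter_upwards [hopen.mem_nhds (by exact hBq)] with y hy
          have hys := four_le_norms y
          have hy' : ‖y + (2:ℝ) • e1‖ < 1 := hy
          rw [dumbbell, if_neg (by linarith), if_neg (by push_neg; linarith),
            if_pos (le_of_lt hy')]
        rw [hev.fderiv_eq]
        simp [hUnn]
      · push_neg at hBq
        have hq1 : 1 < q := lt_of_le_of_ne hBq (Ne.symm hqne1)
        by_cases hD : q < 2 + x₀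
        · exact dumbbell_fderiv_bound_minus hb hmeas hrange hrad hx₀ hq1 hD hcq
        · push_neg at hD
          have hq2 : 2 + x₀ < q := lt_of_le_of_ne hD (Ne.symm hqne3)
          have hopen : IsOpen ({y : E3 | 2 - x₀ < ‖y - (2:ℝ) • e1‖} ∩
              {y : E3 | 2 + x₀ < ‖y + (2:ℝ) • e1‖}) :=
            (isOpen_Ioi.preimage ((continuous_id.sub continuous_const).norm)).inter
              (isOpen_Ioi.preimage ((continuous_id.add continuous_const).norm))
          have hev : dumbbell U x₀ =ᶠ[nhds x] fun _ => (0:ℝ) := by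
            filter_upwards [hopen.mem_nhds ⟨hr2, hq2⟩] with y hy
            exact dumbbell_zero_outside hx₀ y (le_of_lt hy.1) (le_of_lt hy.2)
          rw [hev.fderiv_eq]
          simp [hUnn]

/-- derivative bound for Lipschitz functions -/
lemma norm_deriv_le_of_lip {F : Type*} [NormedAddCommGroup F] [NormedSpace ℝ F]
    {f : ℝ → F} {K : ℝ≥0} (hf : LipschitzWith K f) (s : ℝ) : ‖deriv f s‖ ≤ K := by
  rw [← fderiv_apply_one_eq_deriv]
  calc ‖(fderiv ℝ f s) 1‖ ≤ ‖fderiv ℝ f s‖ * ‖(1:ℝ)‖ := (fderiv ℝ f s).le_opNorm 1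
    _ ≤ K := by simpa using norm_fderiv_le_of_lipschitz ℝ hf

/-- The dumbbell function realizes the weighted distance. -/
lemma dumbbell_wdist {b : ℝ} {U : E3 → ℝ} (hb : 0 < b) (hmeas : Measurable U)
    (hrange : ∀ x, U x ∈ Set.Icc b 1) (hrad : ∀ x y : E3, ‖x‖ ≤ ‖y‖ → U x ≤ U y)
    {x₀ : ℝ} (hx₀ : |x₀| < 1) :
    dumbbell U x₀ e1 - dumbbell U x₀ (-e1) = wdist (fun x => (U x)^2) e1 (-e1) := by
  obtain ⟨hx₀l, hx₀r⟩ := abs_lt.1 hx₀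
  -- endpoint values
  have hve : dumbbell U x₀ e1 = xi0 U x₀ 1 := by
    have h1 : e1 - (2:ℝ) • e1 = -e1 := by module
    rw [dumbbell, if_pos (by rw [h1, norm_neg, e1_norm])]
  have hvn : dumbbell U x₀ (-e1) = xi0 U x₀ (-1) := by
    have h1 : -e1 - (2:ℝ) • e1 = -((3:ℝ) • e1) := by module
    have h2 : -e1 + (2:ℝ) • e1 = e1 := by module
    have h3 : ‖-e1 - (2:ℝ) • e1‖ = 3 := by
      rw [h1, norm_neg, norm_smul_e1]; norm_num
    rw [dumbbell, if_neg (by rw [h3]; norm_num), if_neg (by rw [h3]; linarith),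
      if_pos (by rw [h2, e1_norm])]
  set D : ℝ := ∫ t in (-1:ℝ)..1, hax U t with hD
  have hdiff : dumbbell U x₀ e1 - dumbbell U x₀ (-e1) = D := by
    rw [hve, hvn, hD]; exact xi0_sub hb hmeas hrange x₀ 1 (-1)
  rw [hdiff, wdist]
  set S := { L : ℝ | ∃ γ : ℝ → E3, (∃ K : NNReal, LipschitzWith K γ) ∧ γ 0 = e1 ∧
    γ 1 = -e1 ∧ L = ∫ s in (0:ℝ)..1, (U (γ s))^2 * ‖deriv γ s‖ } with hS
  -- the straight segment realizes D
  have hDmem : D ∈ S := by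
    set c : E3 := (-2:ℝ) • e1 with hc
    set γ0 : ℝ → E3 := fun s => e1 + s • c with hγ0
    have hγd : ∀ s, deriv γ0 s = c := by
      intro s
      have hder : HasDerivAt γ0 c s := by
        have h5 : HasDerivAt (fun y : ℝ => y • c) ((1:ℝ) • c) s :=
          (hasDerivAt_id s).smul_const c
        have h6 := h5.const_add e1; rw [one_smul] at h6; exact h6
      exact hder.deriv
    have hγlip : LipschitzWith 2 γ0 := by
      apply LipschitzWith.of_dist_le_mul
      intro s t
      have h5 : γ0 s - γ0 t = (s - t) • c := by rw [hγ0]; simp only; module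
      rw [dist_eq_norm, h5, norm_smul, hc, norm_smul_e1, Real.norm_eq_abs, Real.dist_eq]
      rw [abs_of_nonpos (by norm_num : (-2:ℝ) ≤ 0)]
      norm_num
      rw [mul_comm]
    refine ⟨γ0, ⟨2, hγlip⟩, by simp [hγ0], by rw [hγ0]; simp only; module, ?_⟩
    have hval : ∀ s : ℝ, (U (γ0 s))^2 * ‖deriv γ0 s‖ = hax U ((-2) * s + 1) * 2 := by
      intro s
      have h5 : γ0 s = ((-2) * s + 1) • e1 := by rw [hγ0]; simp only; module
      rw [hγd s, hc, h5]
      have h6 : ‖(-2:ℝ) • e1‖ = 2 := by rw [norm_smul_e1]; norm_num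
      rw [h6, hax]
    rw [intervalIntegral.integral_congr (fun s _ => hval s)]
    rw [intervalIntegral.integral_mul_const]
    rw [intervalIntegral.integral_comp_mul_add (hax U) (by norm_num : (-2:ℝ) ≠ 0) 1]
    norm_num
    rw [intervalIntegral.integral_symm, hD]
    ring
  -- every competitor is at least D
  have hlow : ∀ L ∈ S, D ≤ L := by
    rintro L ⟨γ, ⟨K, hγ⟩, h0, h1, rfl⟩
    set xc : ℝ → ℝ := fun s => (inner ℝ e1 (γ s) : ℝ) with hxc
    have hxclip : LipschitzWith K xc := by
      apply LipschitzWith.of_dist_le_mul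
      intro s t
      have h5 : xc s - xc t = (inner ℝ e1 (γ s - γ t) : ℝ) := by
        rw [hxc]; simp [inner_sub_right]
      rw [Real.dist_eq, h5]
      calc |(inner ℝ e1 (γ s - γ t) : ℝ)| ≤ ‖e1‖ * ‖γ s - γ t‖ := abs_real_inner_le_norm _ _
        _ = dist (γ s) (γ t) := by rw [e1_norm, one_mul, dist_eq_norm]
        _ ≤ K * dist s t := hγ.dist_le_mul s t
    have hxc0 : xc 0 = 1 := by
      rw [hxc]; simp only; rw [h0, real_inner_self_eq_norm_mul_norm, e1_norm]; norm_num
    have hxc1 : xc 1 = -1 := by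
      rw [hxc]; simp only
      rw [h1, inner_neg_right, real_inner_self_eq_norm_mul_norm, e1_norm]; norm_num
    have hintegrand : IntervalIntegrable (fun s => (U (γ s))^2 * ‖deriv γ s‖) volume 0 1 := by
      apply intervalIntegrable_of_bounded (C := (K:ℝ))
      · exact ((hmeas.comp hγ.continuous.measurable).pow_const 2).mul (measurable_deriv γ).norm
      · intro s
        rw [abs_mul]
        have hU := hrange (γ s)
        have b1 : |(U (γ s))^2| ≤ 1 := by
          rw [abs_of_nonneg (sq_nonneg _)]
          calc (U (γ s))^2 ≤ 1^2 := pow_le_pow_left₀ (le_trans hb.le hU.1) hU.2 2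
            _ = 1 := one_pow 2
        have b2 : |‖deriv γ s‖| ≤ (K:ℝ) := by
          rw [abs_of_nonneg (norm_nonneg _)]; exact norm_deriv_le_of_lip hγ s
        calc |(U (γ s))^2| * |‖deriv γ s‖| ≤ 1 * (K:ℝ) :=
              mul_le_mul b1 b2 (abs_nonneg _) zero_le_one
          _ = (K:ℝ) := one_mul _
    apply le_of_forall_pos_le_add
    intro ε hε
    set δ : ℝ := min (ε/2) 1 with hδdef
    have hδpos : 0 < δ := lt_min (by linarith) one_pos
    have hδ1 : δ ≤ 1 := min_le_right _ _
    have hδε : 2*δ ≤ ε := by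
      have := min_le_left (ε/2) 1; rw [hδdef]; linarith
    suffices hkey : D - 2*δ ≤ ∫ s in (0:ℝ)..1, (U (γ s))^2 * ‖deriv γ s‖ by linarith
    set φ : ℝ → ℝ := fun t => hax U (max t 0) with hφ
    have hφmeas : Measurable φ := (hax_meas hmeas).comp (measurable_id.max measurable_const)
    have hφbd : ∀ t, |φ t| ≤ 1 := fun t => hax_abs_le_one hb hrange _
    have hφint : ∀ a c : ℝ, IntervalIntegrable φ volume a c := fun a c =>
      intervalIntegrable_of_bounded hφmeas hφbd a c
    have hφmono : Monotone φ := by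
      intro s t hst
      apply hax_mono hb hrange hrad
      rw [abs_of_nonneg (le_max_right s 0), abs_of_nonneg (le_max_right t 0)]
      exact max_le_max hst (le_refl 0)
    have hφnn : ∀ t, 0 ≤ φ t := fun t => hax_nonneg U _
    set P : ℝ → ℝ := fun w => ∫ t in (0:ℝ)..w, φ t with hP
    have hPlip : LipschitzWith 1 P := lipschitz_primitive hφmeas (by simpa using hφbd) 0
    set g : ℝ → ℝ := fun w => δ⁻¹ * (P w - P (w - δ)) with hg
    have hgcont : Continuous g :=
      continuous_const.mul (hPlip.continuous.sub
        (hPlip.continuous.comp (continuous_id.sub continuous_const)))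
    have hgdiffint : ∀ w, P w - P (w - δ) = ∫ t in (w-δ)..w, φ t := fun w =>
      intervalIntegral.integral_interval_sub_left (hφint 0 w) (hφint 0 (w-δ))
    have hgle : ∀ w, g w ≤ φ w := by
      intro w
      rw [hg]; simp only; rw [hgdiffint w]
      have hbnd : (∫ t in (w-δ)..w, φ t) ≤ ∫ t in (w-δ)..w, (fun _ => φ w) t :=
        intervalIntegral.integral_mono_on (by linarith) (hφint _ _)
          intervalIntegrable_const (fun t ht => hφmono ht.2)
      rw [intervalIntegral.integral_const, smul_eq_mul] at hbnd
      calc δ⁻¹ * ∫ t in (w-δ)..w, φ t ≤ δ⁻¹ * ((w - (w - δ)) * φ w) :=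
            mul_le_mul_of_nonneg_left hbnd (inv_nonneg.2 hδpos.le)
        _ = φ w := by rw [show w - (w - δ) = δ by ring]; field_simp
    have hgge : ∀ w, φ (w - δ) ≤ g w := by
      intro w
      rw [hg]; simp only; rw [hgdiffint w]
      have hbnd : (∫ t in (w-δ)..w, (fun _ => φ (w-δ)) t) ≤ ∫ t in (w-δ)..w, φ t :=
        intervalIntegral.integral_mono_on (by linarith) intervalIntegrable_const
          (hφint _ _) (fun t ht => hφmono ht.1)
      rw [intervalIntegral.integral_const, smul_eq_mul] at hbnd
      have hrw : φ (w - δ) = δ⁻¹ * ((w - (w - δ)) * φ (w-δ)) := by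
          rw [show w - (w - δ) = δ by ring]; field_simp
      rw [hrw]
      exact mul_le_mul_of_nonneg_left hbnd (inv_nonneg.2 hδpos.le)
    have hgnn : ∀ w, 0 ≤ g w := fun w => le_trans (hφnn (w - δ)) (hgge w)
    have hgle1 : ∀ w, g w ≤ 1 := fun w => le_trans (hgle w) (hax_le_one hb hrange _)
    set htil : ℝ → ℝ := fun t => g |t| with hhtil
    have hhtilcont : Continuous htil := hgcont.comp continuous_abs
    have hhtille : ∀ t, htil t ≤ hax U t := by
      intro t
      calc g |t| ≤ φ |t| := hgle _
        _ = hax U t := by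
            rw [hφ]; simp only; rw [max_eq_left (abs_nonneg t)]; exact hax_abs hrad t
    have hhtnn : ∀ t, 0 ≤ htil t := fun t => hgnn _
    have hht1 : ∀ t, htil t ≤ 1 := fun t => hgle1 _
    set Htil : ℝ → ℝ := fun w => ∫ t in (0:ℝ)..w, htil t with hH
    have hHder : ∀ w, HasDerivAt Htil (htil w) w := fun w =>
      intervalIntegral.integral_hasDerivAt_right (hhtilcont.intervalIntegrable 0 w)
        (hhtilcont.stronglyMeasurableAtFilter _ _) hhtilcont.continuousAt
    have hHlip : LipschitzWith 1 Htil :=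
      lipschitz_primitive (C := 1) hhtilcont.measurable
        (fun t => by rw [abs_of_nonneg (hhtnn t)]; simpa using hht1 t) 0
    set uf : ℝ → ℝ := fun s => Htil (xc s) with huf
    have huflip : LipschitzWith (1*K) uf := hHlip.comp hxclip
    have hFTC : ∫ s in (0:ℝ)..1, deriv uf s = uf 1 - uf 0 :=
      lipschitz_integral_deriv huflip zero_le_one
    have hae : (fun s => -(deriv uf s)) ≤ᵐ[volume] (fun s => (U (γ s))^2 * ‖deriv γ s‖) := by
      filter_upwards [hγ.ae_differentiableAt] with s hs
      have hγd : HasDerivAt γ (deriv γ s) s := hs.hasDerivAt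
      have hxcd : HasDerivAt xc ((inner ℝ e1 (deriv γ s) : ℝ)) s := by
        have h6 := (innerSL ℝ e1).hasFDerivAt.comp_hasDerivAt s hγd
        simp only [innerSL_apply_apply] at h6; exact h6
      have hufd : HasDerivAt uf (htil (xc s) * (inner ℝ e1 (deriv γ s) : ℝ)) s :=
        (hHder (xc s)).comp s hxcd
      rw [hufd.deriv]
      have b1 : |(inner ℝ e1 (deriv γ s) : ℝ)| ≤ ‖deriv γ s‖ := by
        have := abs_real_inner_le_norm e1 (deriv γ s)
        rwa [e1_norm, one_mul] at this
      have b3 : hax U (xc s) ≤ (U (γ s))^2 := by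
        apply hax_le_sq hb hrange hrad
        rw [hxc]; simp only
        have := abs_real_inner_le_norm e1 (γ s)
        rwa [e1_norm, one_mul] at this
      have b2 : htil (xc s) ≤ (U (γ s))^2 := le_trans (hhtille _) b3
      have hnn : 0 ≤ htil (xc s) := hhtnn _
      calc -(htil (xc s) * (inner ℝ e1 (deriv γ s) : ℝ))
          = htil (xc s) * (-(inner ℝ e1 (deriv γ s) : ℝ)) := by ring
        _ ≤ htil (xc s) * |(inner ℝ e1 (deriv γ s) : ℝ)| :=
            mul_le_mul_of_nonneg_left (neg_le_abs _) hnn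
        _ ≤ (U (γ s))^2 * ‖deriv γ s‖ :=
            mul_le_mul b2 b1 (abs_nonneg _) (sq_nonneg _)
    have hIntu : IntervalIntegrable (fun s => -(deriv uf s)) volume 0 1 := by
      apply intervalIntegrable_of_bounded (C := ((1*K : ℝ≥0) : ℝ)) ((measurable_deriv uf).neg)
      intro s
      simpa [Real.norm_eq_abs] using norm_deriv_le_of_lip huflip s
    have hmono := intervalIntegral.integral_mono_ae zero_le_one hIntu hintegrand hae
    have hneg : ∫ s in (0:ℝ)..1, -(deriv uf s) = uf 0 - uf 1 := by
      rw [intervalIntegral.integral_neg, hFTC]; ring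
    have e2 : uf 0 - uf 1 = ∫ t in (-1:ℝ)..1, htil t := by
      rw [huf]; simp only; rw [hxc0, hxc1, hH]; simp only
      exact intervalIntegral.integral_interval_sub_left
        (hhtilcont.intervalIntegrable _ _) (hhtilcont.intervalIntegrable _ _)
    have e3 : ∫ t in (-1:ℝ)..1, htil t = 2 * ∫ w in (0:ℝ)..1, g w := by
      have s1 : (∫ t in (-1:ℝ)..(0:ℝ), htil t) = ∫ w in (0:ℝ)..1, g w := by
        have c1 : Set.EqOn htil (fun t => g (-t)) (Set.uIcc (-1:ℝ) 0) := by
          intro t ht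
          rw [Set.uIcc_of_le (by norm_num : (-1:ℝ) ≤ 0)] at ht
          rw [hhtil]; simp only
          rw [abs_of_nonpos ht.2]
        rw [intervalIntegral.integral_congr c1, intervalIntegral.integral_comp_neg]
        norm_num
      have s2 : (∫ t in (0:ℝ)..1, htil t) = ∫ w in (0:ℝ)..1, g w := by
        apply intervalIntegral.integral_congr
        intro t ht
        rw [Set.uIcc_of_le (by norm_num : (0:ℝ) ≤ 1)] at ht
        rw [hhtil]; simp only
        rw [abs_of_nonneg ht.1]
      have s3 : (∫ t in (-1:ℝ)..1, htil t) =
          (∫ t in (-1:ℝ)..0, htil t) + ∫ t in (0:ℝ)..1, htil t :=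
        (intervalIntegral.integral_add_adjacent_intervals
          (hhtilcont.intervalIntegrable _ _) (hhtilcont.intervalIntegrable _ _)).symm
      rw [s3, s1, s2]; ring
    have e4 : (∫ w in (0:ℝ)..1, φ (w - δ)) ≤ ∫ w in (0:ℝ)..1, g w := by
      apply intervalIntegral.integral_mono_on zero_le_one
      · exact intervalIntegrable_of_bounded
          (hφmeas.comp (measurable_id.sub measurable_const)) (fun t => hφbd _) 0 1
      · exact hgcont.intervalIntegrable _ _
      · exact fun w _ => hgge w
    have e5 : (∫ w in (0:ℝ)..1, φ (w - δ)) = ∫ t in (-δ)..(1-δ), φ t := by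
      have h7 := intervalIntegral.integral_comp_sub_right (a := 0) (b := 1) (f := φ) δ
      simpa using h7
    have e6 : (∫ t in (0:ℝ)..1, φ t) - δ ≤ ∫ t in (-δ)..(1-δ), φ t := by
      have a1 : (∫ t in (-δ)..(1-δ), φ t) =
          (∫ t in (-δ)..(0:ℝ), φ t) + ∫ t in (0:ℝ)..(1-δ), φ t :=
        (intervalIntegral.integral_add_adjacent_intervals (hφint _ _) (hφint _ _)).symm
      have a2 : 0 ≤ ∫ t in (-δ)..(0:ℝ), φ t :=
        intervalIntegral.integral_nonneg (by linarith) (fun t _ => hφnn t)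
      have a3 : (∫ t in (0:ℝ)..1, φ t) =
          (∫ t in (0:ℝ)..(1-δ), φ t) + ∫ t in (1-δ)..1, φ t :=
        (intervalIntegral.integral_add_adjacent_intervals (hφint _ _) (hφint _ _)).symm
      have a4 : (∫ t in (1-δ)..1, φ t) ≤ δ := by
        have h8 := intervalIntegral.norm_integral_le_of_norm_le_const (C := 1) (f := φ)
          (a := 1-δ) (b := 1) (fun t _ => by rw [Real.norm_eq_abs]; exact hφbd t)
        calc (∫ t in (1-δ)..1, φ t) ≤ |∫ t in (1-δ)..1, φ t| := le_abs_self _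
          _ ≤ 1 * |1 - (1-δ)| := by rw [← Real.norm_eq_abs]; exact h8
          _ = δ := by rw [show (1:ℝ) - (1-δ) = δ by ring, abs_of_pos hδpos, one_mul]
      linarith
    have e7 : (∫ t in (0:ℝ)..1, φ t) = ∫ t in (0:ℝ)..1, hax U t := by
      apply intervalIntegral.integral_congr
      intro t ht
      rw [Set.uIcc_of_le (by norm_num : (0:ℝ) ≤ 1)] at ht
      rw [hφ]; simp only; rw [max_eq_left ht.1]
    have e8 : D = 2 * ∫ t in (0:ℝ)..1, hax U t := by
      have s1 : (∫ t in (-1:ℝ)..(0:ℝ), hax U t) = ∫ t in (0:ℝ)..1, hax U t := by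
        have c1 : Set.EqOn (hax U) (fun t => hax U (-t)) (Set.uIcc (-1:ℝ) 0) :=
          fun t _ => (hax_even hrad t).symm
        rw [intervalIntegral.integral_congr c1, intervalIntegral.integral_comp_neg]
        norm_num
      have s3 : D = (∫ t in (-1:ℝ)..0, hax U t) + ∫ t in (0:ℝ)..1, hax U t := by
        rw [hD]
        exact (intervalIntegral.integral_add_adjacent_intervals
          (hax_intervalIntegrable hb hmeas hrange _ _)
          (hax_intervalIntegrable hb hmeas hrange _ _)).symm
      rw [s3, s1]; ring
    have final : D - 2*δ ≤ ∫ t in (-1:ℝ)..1, htil t := by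
      rw [e3, e8]
      rw [e5] at e4
      linarith
    linarith [hmono, hneg, e2, final]
  have hbdd : BddBelow S := by
    refine ⟨0, fun L hL => ?_⟩
    obtain ⟨γ, _, _, _, rfl⟩ := hL
    apply intervalIntegral.integral_nonneg zero_le_one
    intro t _
    positivity
  exact le_antisymm (le_csInf ⟨D, hDmem⟩ hlow) (csInf_le hbdd hDmem)

/-- The dumbbell lemma: `ξ` is Lipschitz, `|∇ξ| ≤ U²` a.e.,
`ξ(p) - ξ(n) = d_{U²}(p,n)`, and `ξ ≡ 0` outside
`B((2,0,0),2-x₀) ∪ B((-2,0,0),2+x₀)` (a neighborhood of `M`). -/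
theorem stmt_15 (b : ℝ) (hb : 0 < b) (hb1 : b < 1)
    (U : E3 → ℝ) (hmeas : Measurable U) (hrange : ∀ x, U x ∈ Set.Icc b 1)
    (hrad : ∀ x y : E3, ‖x‖ ≤ ‖y‖ → U x ≤ U y)
    (M : E3) (hM : M ∈ Metric.ball (0:E3) 1) (hMseg : M ∉ segment ℝ (-e1) e1) :
    (∃ K : NNReal, LipschitzWith K (dumbbell U (M 0))) ∧
    (∀ᵐ x : E3 ∂volume, ‖fderiv ℝ (dumbbell U (M 0)) x‖ ≤ (U x)^2) ∧
    dumbbell U (M 0) e1 - dumbbell U (M 0) (-e1) = wdist (fun x => (U x)^2) e1 (-e1) ∧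
    (∀ x : E3,
      x ∉ Metric.ball ((2:ℝ) • e1) (2 - M 0) ∪ Metric.ball (-((2:ℝ) • e1)) (2 + M 0) →
      dumbbell U (M 0) x = 0) := by
  have hx₀ : |M 0| < 1 := by
    have h1 : |M 0| ≤ ‖M‖ := by
      have he : (inner ℝ e1 M : ℝ) = M 0 := by
        simp [e1, EuclideanSpace.inner_single_left]
      calc |M 0| = |(inner ℝ e1 M : ℝ)| := by rw [he]
        _ ≤ ‖e1‖ * ‖M‖ := abs_real_inner_le_norm e1 M
        _ = ‖M‖ := by rw [e1_norm, one_mul]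
    have h2 : ‖M‖ < 1 := by simpa [Metric.mem_ball, dist_zero_right] using hM
    linarith
  refine ⟨⟨2, dumbbell_lipschitz hb hmeas hrange hx₀⟩, ?_, ?_, ?_⟩
  · exact dumbbell_fderiv_ae hb hmeas hrange hrad hx₀
  · exact dumbbell_wdist hb hmeas hrange hrad hx₀
  · intro x hx
    simp only [Set.mem_union, Metric.mem_ball, not_or, not_lt] at hx
    apply dumbbell_zero_outside hx₀
    · rw [← dist_eq_norm]; exact hx.1
    · have : ‖x + (2:ℝ) • e1‖ = dist x (-((2:ℝ) • e1)) := by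
        rw [dist_eq_norm, sub_neg_eq_add]
      rw [this]; exact hx.2

end
end

section
/- Let a² be the weight equal to b² on a bounded strictly convex open ω and 1 outside, b ∈ (0,1). Suppose P = {p₁,…,p_k}, N = {n₁,…,n_k} ⊂ ∂Ω with a unique minimal connection σ for (P∪N, d_{a²}), and let Γᵢ be geodesics joining pᵢ to n_{σ(i)} forming a geodesic link. If for each i the geodesic Γᵢ is a Euclidean line segment, then the segments are pairwise disjoint: Γᵢ ∩ Γⱼ = ∅ for i ≠ j. -/
open MeasureTheory Pointwise
open scoped Classical

noncomputable section

/-- The pinning term `a`, equal to `b` on `ω` and `1` elsewhere. -/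
noncomputable def aFun (b : ℝ) (ω : Set E3) : E3 → ℝ :=
  fun x => if x ∈ ω then b else 1

lemma deriv_comp_affine (g : ℝ → E3) (c : ℝ) (hc : c ≠ 0) (d s : ℝ) :
    deriv (fun t => g (c * t + d)) s = c • deriv g (c * s + d) := by
  by_cases h : DifferentiableAt ℝ g (c * s + d)
  · have h1 : HasDerivAt (fun t : ℝ => c * t + d) c s := by
      simpa using ((hasDerivAt_id s).const_mul c).add_const d
    exact (HasDerivAt.scomp s h.hasDerivAt h1).deriv
  · have h3 : ¬ DifferentiableAt ℝ (fun t => g (c * t + d)) s := by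
      intro hd
      apply h
      have heq : g = (fun t => g (c * t + d)) ∘ (fun u => (u - d) / c) := by
        funext u; simp only [Function.comp]; field_simp; rw [sub_add_cancel]
      have hin : ((c * s + d : ℝ) - d) / c = s := by field_simp; ring
      rw [heq]
      exact DifferentiableAt.comp _ (by rw [hin]; exact hd) (by fun_prop)
    rw [deriv_zero_of_not_differentiableAt h3, deriv_zero_of_not_differentiableAt h, smul_zero]

lemma integrand_ii {f : E3 → ℝ} (hf : Measurable f) (hf1 : ∀ z, f z ≤ 1)
    (hf0 : ∀ z, 0 ≤ f z) {γ : ℝ → E3} {K : NNReal} (hγ : LipschitzWith K γ)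
    (a c : ℝ) : IntervalIntegrable (fun s => f (γ s) * ‖deriv γ s‖) volume a c := by
  rw [intervalIntegrable_iff]
  have hm : Measurable (fun s => f (γ s) * ‖deriv γ s‖) :=
    (hf.comp hγ.continuous.measurable).mul (measurable_deriv γ).norm
  apply Integrable.mono' (g := fun _ => (K : ℝ))
  · exact integrableOn_const measure_Ioc_lt_top.ne
  · exact hm.aestronglyMeasurable.restrict
  · filter_upwards with s
    have h1 : ‖deriv γ s‖ ≤ (K : ℝ) := norm_deriv_le_of_lipschitz (𝕜 := ℝ) hγ
    have h2 : 0 ≤ f (γ s) * ‖deriv γ s‖ := mul_nonneg (hf0 _) (norm_nonneg _)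
    rw [Real.norm_eq_abs, abs_of_nonneg h2]
    calc f (γ s) * ‖deriv γ s‖ ≤ 1 * (K : ℝ) :=
          mul_le_mul (hf1 _) h1 (norm_nonneg _) zero_le_one
      _ = (K : ℝ) := one_mul _

lemma wdist_set_nonneg (f : E3 → ℝ) (hf0 : ∀ z, 0 ≤ f z) (x y : E3) :
    ∀ L ∈ { L : ℝ | ∃ γ : ℝ → E3, (∃ K : NNReal, LipschitzWith K γ) ∧ γ 0 = x ∧ γ 1 = y ∧
      L = ∫ s in (0:ℝ)..1, f (γ s) * ‖deriv γ s‖ }, 0 ≤ L := by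
  rintro L ⟨γ, _, _, _, rfl⟩
  exact intervalIntegral.integral_nonneg zero_le_one fun s _ =>
    mul_nonneg (hf0 _) (norm_nonneg _)

lemma wdist_set_nonempty (f : E3 → ℝ) (x y : E3) :
    { L : ℝ | ∃ γ : ℝ → E3, (∃ K : NNReal, LipschitzWith K γ) ∧ γ 0 = x ∧ γ 1 = y ∧
      L = ∫ s in (0:ℝ)..1, f (γ s) * ‖deriv γ s‖ }.Nonempty := by
  refine ⟨_, fun s => x + s • (y - x), ⟨‖y - x‖₊, ?_⟩, by simp, by simp, rfl⟩
  apply LipschitzWith.of_dist_le_mul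
  intro s t
  simp only [dist_eq_norm]
  have : x + s • (y - x) - (x + t • (y - x)) = (s - t) • (y - x) := by module
  rw [this, norm_smul]
  simp [Real.norm_eq_abs, Real.dist_eq, mul_comm]

lemma concat_mem {f : E3 → ℝ} (hf : Measurable f) (hf1 : ∀ z, f z ≤ 1)
    (hf0 : ∀ z, 0 ≤ f z) (x z y : E3) (L1 L2 : ℝ)
    (h1 : L1 ∈ { L : ℝ | ∃ γ : ℝ → E3, (∃ K : NNReal, LipschitzWith K γ) ∧ γ 0 = x ∧ γ 1 = z ∧
      L = ∫ s in (0:ℝ)..1, f (γ s) * ‖deriv γ s‖ })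
    (h2 : L2 ∈ { L : ℝ | ∃ γ : ℝ → E3, (∃ K : NNReal, LipschitzWith K γ) ∧ γ 0 = z ∧ γ 1 = y ∧
      L = ∫ s in (0:ℝ)..1, f (γ s) * ‖deriv γ s‖ }) :
    L1 + L2 ∈ { L : ℝ | ∃ γ : ℝ → E3, (∃ K : NNReal, LipschitzWith K γ) ∧ γ 0 = x ∧ γ 1 = y ∧
      L = ∫ s in (0:ℝ)..1, f (γ s) * ‖deriv γ s‖ } := by
  obtain ⟨γ1, ⟨K1, hK1⟩, h10, h11, hL1⟩ := h1
  obtain ⟨γ2, ⟨K2, hK2⟩, h20, h21, hL2⟩ := h2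
  set γ : ℝ → E3 := fun s => if s ≤ 1/2 then γ1 (2*s) else γ2 (2*s - 1) with hγdef
  have hzz : γ1 1 = γ2 0 := by rw [h11, h20]
  -- Lipschitz
  have hlip : LipschitzWith (2 * (K1 ⊔ K2)) γ := by
    have hK : ((2 * (K1 ⊔ K2) : NNReal) : ℝ) = 2 * max (K1 : ℝ) (K2 : ℝ) := by
      push_cast; try rfl
    have aux : ∀ s t : ℝ, s ≤ t → dist (γ s) (γ t) ≤ (2 * max (K1:ℝ) (K2:ℝ)) * (t - s) := by
      intro s t hst
      have hm1 : (K1 : ℝ) ≤ max (K1:ℝ) (K2:ℝ) := le_max_left _ _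
      have hm2 : (K2 : ℝ) ≤ max (K1:ℝ) (K2:ℝ) := le_max_right _ _
      by_cases ht : t ≤ 1/2
      · have hs : s ≤ 1/2 := hst.trans ht
        simp only [hγdef, if_pos hs, if_pos ht]
        calc dist (γ1 (2*s)) (γ1 (2*t)) ≤ K1 * dist (2*s) (2*t) := hK1.dist_le_mul _ _
          _ ≤ (2 * max (K1:ℝ) (K2:ℝ)) * (t - s) := by
              rw [Real.dist_eq, abs_of_nonpos (by linarith)]
              nlinarith [K1.coe_nonneg, K2.coe_nonneg]
      · by_cases hs : s ≤ 1/2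
        · simp only [hγdef, if_pos hs, if_neg ht]
          calc dist (γ1 (2*s)) (γ2 (2*t-1))
              ≤ dist (γ1 (2*s)) (γ1 1) + dist (γ2 0) (γ2 (2*t-1)) := by
                rw [hzz]; exact dist_triangle _ _ _
            _ ≤ K1 * dist (2*s) 1 + K2 * dist 0 (2*t-1) :=
                add_le_add (hK1.dist_le_mul _ _) (hK2.dist_le_mul _ _)
            _ ≤ (2 * max (K1:ℝ) (K2:ℝ)) * (t - s) := by
                rw [Real.dist_eq, Real.dist_eq, abs_of_nonpos (by linarith),
                  abs_of_nonpos (by push_neg at ht; linarith)]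
                push_neg at ht
                nlinarith [K1.coe_nonneg, K2.coe_nonneg]
        · push_neg at hs
          simp only [hγdef, if_neg (not_le.2 hs), if_neg ht]
          calc dist (γ2 (2*s-1)) (γ2 (2*t-1)) ≤ K2 * dist (2*s-1) (2*t-1) :=
              hK2.dist_le_mul _ _
            _ ≤ (2 * max (K1:ℝ) (K2:ℝ)) * (t - s) := by
                rw [Real.dist_eq, abs_of_nonpos (by linarith)]
                nlinarith [K1.coe_nonneg, K2.coe_nonneg]
    apply LipschitzWith.of_dist_le_mul
    intro s t
    rw [hK]
    rcases le_total s t with h | h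
    · calc dist (γ s) (γ t) ≤ (2 * max (K1:ℝ) (K2:ℝ)) * (t - s) := aux s t h
        _ = (2 * max (K1:ℝ) (K2:ℝ)) * dist s t := by
            rw [Real.dist_eq, abs_of_nonpos (by linarith)]; ring
    · calc dist (γ s) (γ t) = dist (γ t) (γ s) := dist_comm _ _
        _ ≤ (2 * max (K1:ℝ) (K2:ℝ)) * (s - t) := aux t s h
        _ = (2 * max (K1:ℝ) (K2:ℝ)) * dist s t := by
            rw [Real.dist_eq, abs_of_nonneg (by linarith)]
  -- endpoint and derivative facts
  have e1 : ∀ s : ℝ, s < 1/2 → deriv γ s = (2:ℝ) • deriv γ1 (2*s) := by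
    intro s hs
    have hev : γ =ᶠ[nhds s] (fun t => γ1 (2*t + 0)) := by
      filter_upwards [Iio_mem_nhds hs] with t ht
      have ht' : t ≤ 1/2 := le_of_lt (Set.mem_Iio.mp ht)
      show (if t ≤ 1/2 then γ1 (2*t) else γ2 (2*t - 1)) = γ1 (2*t + 0)
      rw [if_pos ht', add_zero]
    rw [hev.deriv_eq, deriv_comp_affine γ1 2 two_ne_zero 0 s, add_zero]
  have e2 : ∀ s : ℝ, 1/2 < s → deriv γ s = (2:ℝ) • deriv γ2 (2*s - 1) := by
    intro s hs
    have hev : γ =ᶠ[nhds s] (fun t => γ2 (2*t + (-1))) := by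
      filter_upwards [Ioi_mem_nhds hs] with t ht
      have ht' : ¬ t ≤ 1/2 := not_le.2 (Set.mem_Ioi.mp ht)
      show (if t ≤ 1/2 then γ1 (2*t) else γ2 (2*t - 1)) = γ2 (2*t + (-1))
      rw [if_neg ht', sub_eq_add_neg]
    rw [hev.deriv_eq, deriv_comp_affine γ2 2 two_ne_zero (-1) s,
      show (2*s + (-1):ℝ) = 2*s - 1 from by ring]
  have hae : ∀ᵐ s : ℝ, s ≠ (1/2:ℝ) := by
    have h0 : (volume : Measure ℝ) {(1/2:ℝ)} = 0 := measure_singleton _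
    rw [ae_iff]
    convert h0 using 2
    ext s; simp
  have p1 : (∫ s in (0:ℝ)..(1/2), f (γ s) * ‖deriv γ s‖) = L1 := by
    have step1 : (∫ s in (0:ℝ)..(1/2), f (γ s) * ‖deriv γ s‖)
        = ∫ s in (0:ℝ)..(1/2), 2 * (f (γ1 (2*s)) * ‖deriv γ1 (2*s)‖) := by
      apply intervalIntegral.integral_congr_ae
      filter_upwards [hae] with s hs hmem
      rw [Set.uIoc_of_le (by norm_num : (0:ℝ) ≤ 1/2)] at hmem
      have hlt : s < 1/2 := lt_of_le_of_ne hmem.2 hs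
      have hg : γ s = γ1 (2*s) := by
        show (if s ≤ 1/2 then γ1 (2*s) else γ2 (2*s - 1)) = γ1 (2*s)
        rw [if_pos hlt.le]
      rw [hg, e1 s hlt, norm_smul]
      simp [Real.norm_eq_abs]
      ring
    rw [step1, intervalIntegral.integral_const_mul]
    have hsub := intervalIntegral.integral_comp_mul_left (a := (0:ℝ)) (b := 1/2)
      (fun u => f (γ1 u) * ‖deriv γ1 u‖) (c := 2) two_ne_zero
    rw [hsub, hL1]
    norm_num [smul_eq_mul]
    ring
  have p2 : (∫ s in (1/2:ℝ)..1, f (γ s) * ‖deriv γ s‖) = L2 := by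
    have step1 : (∫ s in (1/2:ℝ)..1, f (γ s) * ‖deriv γ s‖)
        = ∫ s in (1/2:ℝ)..1, 2 * (f (γ2 (2*s - 1)) * ‖deriv γ2 (2*s - 1)‖) := by
      apply intervalIntegral.integral_congr_ae
      apply Filter.Eventually.of_forall
      intro s hmem
      rw [Set.uIoc_of_le (by norm_num : (1/2:ℝ) ≤ 1)] at hmem
      have hlt : 1/2 < s := hmem.1
      have hg : γ s = γ2 (2*s - 1) := by
        show (if s ≤ 1/2 then γ1 (2*s) else γ2 (2*s - 1)) = γ2 (2*s - 1)
        rw [if_neg (not_le.2 hlt)]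
      rw [hg, e2 s hlt, norm_smul]
      simp [Real.norm_eq_abs]
      ring
    rw [step1, intervalIntegral.integral_const_mul]
    have hsub := intervalIntegral.integral_comp_mul_sub (a := (1/2:ℝ)) (b := 1)
      (fun u => f (γ2 u) * ‖deriv γ2 u‖) (c := 2) two_ne_zero 1
    rw [hsub, hL2]
    norm_num [smul_eq_mul]
    ring
  refine ⟨γ, ⟨_, hlip⟩, by norm_num [hγdef, h10], by norm_num [hγdef, h21], ?_⟩
  rw [← p1, ← p2]
  exact intervalIntegral.integral_add_adjacent_intervals
    (integrand_ii hf hf1 hf0 hlip 0 (1/2)) (integrand_ii hf hf1 hf0 hlip (1/2) 1)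

lemma wdist_triangle {f : E3 → ℝ} (hf : Measurable f) (hf1 : ∀ z, f z ≤ 1)
    (hf0 : ∀ z, 0 ≤ f z) (x z y : E3) :
    wdist f x y ≤ wdist f x z + wdist f z y := by
  have hbdd : ∀ u v : E3, BddBelow { L : ℝ | ∃ γ : ℝ → E3,
      (∃ K : NNReal, LipschitzWith K γ) ∧ γ 0 = u ∧ γ 1 = v ∧
      L = ∫ s in (0:ℝ)..1, f (γ s) * ‖deriv γ s‖ } :=
    fun u v => ⟨0, fun L hL => wdist_set_nonneg f hf0 u v L hL⟩
  have key : ∀ L1 ∈ { L : ℝ | ∃ γ : ℝ → E3, (∃ K : NNReal, LipschitzWith K γ) ∧ γ 0 = x ∧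
        γ 1 = z ∧ L = ∫ s in (0:ℝ)..1, f (γ s) * ‖deriv γ s‖ },
      ∀ L2 ∈ { L : ℝ | ∃ γ : ℝ → E3, (∃ K : NNReal, LipschitzWith K γ) ∧ γ 0 = z ∧
        γ 1 = y ∧ L = ∫ s in (0:ℝ)..1, f (γ s) * ‖deriv γ s‖ },
      wdist f x y ≤ L1 + L2 := by
    intro L1 h1 L2 h2
    exact csInf_le (hbdd x y) (concat_mem hf hf1 hf0 x z y L1 L2 h1 h2)
  have step : ∀ L1 ∈ { L : ℝ | ∃ γ : ℝ → E3, (∃ K : NNReal, LipschitzWith K γ) ∧ γ 0 = x ∧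
      γ 1 = z ∧ L = ∫ s in (0:ℝ)..1, f (γ s) * ‖deriv γ s‖ },
      wdist f x y ≤ L1 + wdist f z y := by
    intro L1 h1
    have h : wdist f x y - L1 ≤ wdist f z y := by
      exact le_csInf (wdist_set_nonempty f z y) fun L2 h2 => by linarith [key L1 h1 L2 h2]
    linarith
  have h : wdist f x y - wdist f z y ≤ wdist f x z := by
    exact le_csInf (wdist_set_nonempty f x z) fun L1 h1 => by linarith [step L1 h1]
  linarith


/-- If all geodesics of a geodesic link associated to the unique minimal connection
`σ` are Euclidean line segments, then these segments are pairwise disjoint. -/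
theorem stmt_18 (b : ℝ) (hb : 0 < b) (hb1 : b < 1)
    (ω Ω : Set E3) (hconv : StrictConvex ℝ ω) (hωopen : IsOpen ω)
    (hωbdd : Bornology.IsBounded ω) (hΩopen : IsOpen Ω)
    (hΩbdd : Bornology.IsBounded Ω) (hsub : closure ω ⊆ Ω)
    (k : ℕ) (p n : Fin k → E3)
    (hpΩ : ∀ i, p i ∈ frontier Ω) (hnΩ : ∀ i, n i ∈ frontier Ω)
    (hp : Function.Injective p) (hn : Function.Injective n) (hpn : ∀ i j, p i ≠ n j)
    (σ : Equiv.Perm (Fin k))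
    (hmin : ∀ τ : Equiv.Perm (Fin k), τ ≠ σ →
      ∑ i, wdist (fun z => (aFun b ω z)^2) (p i) (n (σ i)) <
        ∑ i, wdist (fun z => (aFun b ω z)^2) (p i) (n (τ i)))
    (hgeo : ∀ i, ∀ z ∈ segment ℝ (p i) (n (σ i)),
      wdist (fun z => (aFun b ω z)^2) (p i) (n (σ i)) =
        wdist (fun z' => (aFun b ω z')^2) (p i) z +
          wdist (fun z' => (aFun b ω z')^2) z (n (σ i))) :
    ∀ i j, i ≠ j →
      segment ℝ (p i) (n (σ i)) ∩ segment ℝ (p j) (n (σ j)) = ∅ := by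
  intro i j hij
  by_contra hne
  obtain ⟨z, hzi, hzj⟩ := Set.nonempty_iff_ne_empty.2 hne
  set F : E3 → ℝ := fun z => (aFun b ω z)^2 with hF
  have hfm : Measurable F := by
    apply Measurable.pow_const
    unfold aFun
    exact Measurable.ite hωopen.measurableSet measurable_const measurable_const
  have hf1 : ∀ z, F z ≤ 1 := by
    intro w
    simp only [hF, aFun]
    split_ifs
    · nlinarith
    · norm_num
  have hf0 : ∀ z, 0 ≤ F z := fun w => sq_nonneg _
  set τ : Equiv.Perm (Fin k) := σ * Equiv.swap i j with hτdef
  have hτ : τ ≠ σ := by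
    intro h
    have h1 : (σ * Equiv.swap i j) i = σ i := by rw [← hτdef, h]
    rw [Equiv.Perm.mul_apply, Equiv.swap_apply_left] at h1
    exact hij (σ.injective h1).symm
  have hlt := hmin τ hτ
  -- sum decomposition
  set s : Finset (Fin k) := (Finset.univ.erase i).erase j with hs
  have hjmem : j ∈ Finset.univ.erase i :=
    Finset.mem_erase.2 ⟨hij.symm, Finset.mem_univ _⟩
  have huniv : insert i (insert j s) = (Finset.univ : Finset (Fin k)) := by
    rw [hs, Finset.insert_erase hjmem]
    exact Finset.insert_erase (Finset.mem_univ i)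
  have hinot : i ∉ insert j s := by
    simp only [Finset.mem_insert, hs, Finset.mem_erase]
    push_neg
    exact ⟨hij, fun _ h => absurd h (by simp)⟩
  have hjnot : j ∉ s := by rw [hs]; exact Finset.notMem_erase _ _
  have hsum : ∀ q : Fin k → ℝ, ∑ m, q m = q i + (q j + ∑ m ∈ s, q m) := by
    intro q
    rw [← huniv, Finset.sum_insert hinot, Finset.sum_insert hjnot]
  have hTs : ∑ m ∈ s, wdist F (p m) (n (τ m)) = ∑ m ∈ s, wdist F (p m) (n (σ m)) := by
    refine Finset.sum_congr rfl fun m hm => ?_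
    rw [hs, Finset.mem_erase, Finset.mem_erase] at hm
    rw [hτdef, Equiv.Perm.mul_apply, Equiv.swap_apply_of_ne_of_ne hm.2.1 hm.1]
  have hτi : τ i = σ j := by rw [hτdef, Equiv.Perm.mul_apply, Equiv.swap_apply_left]
  have hτj : τ j = σ i := by rw [hτdef, Equiv.Perm.mul_apply, Equiv.swap_apply_right]
  rw [hsum (fun m => wdist F (p m) (n (σ m))), hsum (fun m => wdist F (p m) (n (τ m)))] at hlt
  simp only [hτi, hτj, hTs] at hlt
  have hgi := hgeo i z hzi
  have hgj := hgeo j z hzj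
  have tri1 : wdist F (p i) (n (σ j)) ≤ wdist F (p i) z + wdist F z (n (σ j)) :=
    wdist_triangle hfm hf1 hf0 _ _ _
  have tri2 : wdist F (p j) (n (σ i)) ≤ wdist F (p j) z + wdist F z (n (σ i)) :=
    wdist_triangle hfm hf1 hf0 _ _ _
  linarith


end
end
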